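/- For any injective map f : X → Y, 𝒵(f) preserves strong determinism of ZSDDs: if every decomposition {(p_i,s_i)} in α ∈ 𝒵(X) satisfies ξ(p_i) ∩ ξ(p_j) = ∅ for i ≠ j, then the same holds for 𝒵(f)(α). -/
import Mathlib


/-- ZSDDs over X: terminals ⊥, ε, literals x, ±x, and decompositions. -/
inductive ZSDD (X : Type) where
  | bot : ZSDD X
  | eps : ZSDD X
  | lit (x : X) : ZSDD X
  | plit (x : X) : ZSDD X
  | decomp (l : List (ZSDD X × ZSDD X)) : ZSDD X

mutual
/-- Relabeling of ZSDDs (action of the functor 𝒵 on maps). -/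
def Zmap {X Y : Type} (f : X → Y) : ZSDD X → ZSDD Y
  | .bot => .bot
  | .eps => .eps
  | .lit x => .lit (f x)
  | .plit x => .plit (f x)
  | .decomp l => .decomp (ZmapList f l)

def ZmapList {X Y : Type} (f : X → Y) :
    List (ZSDD X × ZSDD X) → List (ZSDD Y × ZSDD Y)
  | [] => []
  | (p, s) :: rest => (Zmap f p, Zmap f s) :: ZmapList f rest
end

/-- The join P ⊔ Q = {A ∪ B | A ∈ P, B ∈ Q}. -/
def sjoin {X : Type} (P Q : Set (Set X)) : Set (Set X) :=
  Set.image2 (· ∪ ·) P Q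

mutual
/-- ZSDD semantics ξ_X : 𝒵(X) → 𝒫²(X). -/
def zsddSem {X : Type} : ZSDD X → Set (Set X)
  | .bot => ∅
  | .eps => {∅}
  | .lit x => {{x}}
  | .plit x => {∅, {x}}
  | .decomp l => zsddSemList l

/-- Semantics of a decomposition: ⋃ᵢ ξ(pᵢ) ⊔ ξ(sᵢ). -/
def zsddSemList {X : Type} : List (ZSDD X × ZSDD X) → Set (Set X)
  | [] => ∅
  | (p, s) :: rest => sjoin (zsddSem p) (zsddSem s) ∪ zsddSemList rest
end

mutual
/-- A ZSDD is strongly deterministic: every decomposition occurring in it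
has pairwise disjoint primes. -/
def ZStronglyDet {X : Type} : ZSDD X → Prop
  | .bot => True
  | .eps => True
  | .lit _ => True
  | .plit _ => True
  | .decomp l =>
      ZStronglyDetList l ∧
        l.Pairwise (fun a b => zsddSem a.1 ∩ zsddSem b.1 = ∅)

def ZStronglyDetList {X : Type} : List (ZSDD X × ZSDD X) → Prop
  | [] => True
  | (p, s) :: rest => ZStronglyDet p ∧ ZStronglyDet s ∧ ZStronglyDetList rest
end

mutual
theorem zsddSem_Zmap {X Y : Type} (f : X → Y) (α : ZSDD X) :
    zsddSem (Zmap f α) = Set.image (Set.image f) (zsddSem α) := by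
  cases α with
  | bot => simp [Zmap, zsddSem]
  | eps => simp [Zmap, zsddSem]
  | lit x => simp [Zmap, zsddSem]
  | plit x => simp [Zmap, zsddSem, Set.image_pair]
  | decomp l => simpa [Zmap, zsddSem] using zsddSemList_ZmapList f l

theorem zsddSemList_ZmapList {X Y : Type} (f : X → Y)
    (l : List (ZSDD X × ZSDD X)) :
    zsddSemList (ZmapList f l) = Set.image (Set.image f) (zsddSemList l) := by
  cases l with
  | nil => simp [ZmapList, zsddSemList]
  | cons ps rest =>
    obtain ⟨p, s⟩ := ps
    have hp := zsddSem_Zmap f p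
    have hs := zsddSem_Zmap f s
    have hr := zsddSemList_ZmapList f rest
    simp only [ZmapList, zsddSemList, hp, hs, hr, Set.image_union]
    congr 1
    ext A
    simp only [sjoin, Set.mem_image2, Set.mem_image]
    constructor
    · rintro ⟨_, ⟨a, ha, rfl⟩, _, ⟨b, hb, rfl⟩, rfl⟩
      exact ⟨a ∪ b, ⟨a, ha, b, hb, rfl⟩, Set.image_union f a b⟩
    · rintro ⟨_, ⟨a, ha, b, hb, rfl⟩, rfl⟩
      exact ⟨f '' a, ⟨a, ha, rfl⟩, f '' b, ⟨b, hb, rfl⟩, (Set.image_union f a b).symm⟩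
end

theorem Zmap_preserves_strongDet {X Y : Type} (f : X → Y)
    (hf : Function.Injective f) (α : ZSDD X) (hα : ZStronglyDet α) :
    ZStronglyDet (Zmap f α) := by
  have key : ∀ (P Q : Set (Set X)), P ∩ Q = ∅ →
      Set.image (Set.image f) P ∩ Set.image (Set.image f) Q = ∅ := by
    intro P Q h
    ext A
    simp only [Set.mem_inter_iff, Set.mem_image, Set.mem_empty_iff_false, iff_false]
    rintro ⟨⟨a, ha, rfl⟩, ⟨b, hb, hab⟩⟩
    have : a = b := (Set.image_injective.mpr hf) hab.symm
    subst this
    have : a ∈ P ∩ Q := ⟨ha, hb⟩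
    simp [h] at this
  have pw : ∀ (l : List (ZSDD X × ZSDD X)),
      l.Pairwise (fun a b => zsddSem a.1 ∩ zsddSem b.1 = ∅) →
      (ZmapList f l).Pairwise (fun a b => zsddSem a.1 ∩ zsddSem b.1 = ∅) := by
    intro l hl
    induction l with
    | nil => simp [ZmapList]
    | cons a rest ihr =>
      obtain ⟨a1, a2⟩ := a
      rw [List.pairwise_cons] at hl
      simp only [ZmapList, List.pairwise_cons]
      refine ⟨?_, ihr hl.2⟩
      intro b hb
      have : ∃ c ∈ rest, (Zmap f c.1, Zmap f c.2) = b := by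
        clear * - hb
        induction rest with
        | nil => simp [ZmapList] at hb
        | cons d ds ihd =>
          obtain ⟨d1, d2⟩ := d
          simp only [ZmapList, List.mem_cons] at hb
          rcases hb with rfl | hb
          · exact ⟨(d1, d2), by simp⟩
          · obtain ⟨c, hc, hcb⟩ := ihd hb
            exact ⟨c, List.mem_cons_of_mem _ hc, hcb⟩
      obtain ⟨c, hc, rfl⟩ := this
      have := hl.1 c hc
      simp only [zsddSem_Zmap]
      exact key _ _ this
  induction α using ZSDD.rec
    (motive_2 := fun l => ZStronglyDetList l → ZStronglyDetList (ZmapList f l))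
    (motive_3 := fun ps => (ZStronglyDet ps.1 → ZStronglyDet (Zmap f ps.1)) ∧
      (ZStronglyDet ps.2 → ZStronglyDet (Zmap f ps.2))) with
  | bot => trivial
  | eps => trivial
  | lit x => trivial
  | plit x => trivial
  | decomp l ih => exact ⟨ih hα.1, pw l hα.2⟩
  | nil => exact True.intro
  | cons ps rest ihp ihr =>
    rename_i h
    obtain ⟨p, s⟩ := ps
    exact ⟨ihp.1 h.1, ihp.2 h.2.1, ihr h.2.2⟩
  | mk p s ihp ihs => exact ⟨ihp, ihs⟩
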